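/- arXiv:1102.0439 — 4 statements merged into one kernel-verified Lean document; each statement's English description precedes it below -/
import Mathlib

section
/- If a bipartite density matrix ρ_AB on C^M ⊗ C^N is separable, then its partial transpose (with respect to the second system) is positive semidefinite. -/
open Matrix BigOperators
open scoped ComplexOrder

noncomputable section

/-- A density matrix: positive semidefinite with trace one. -/
def IsDensity {α : Type*} [Fintype α] (ρ : Matrix α α ℂ) : Prop :=
  ρ.PosSemidef ∧ ρ.trace = 1

/-- Tensor (Kronecker) product of matrices on a product index type. -/
def tens {α β : Type*} (σ : Matrix α α ℂ) (τ : Matrix β β ℂ) :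
    Matrix (α × β) (α × β) ℂ :=
  fun p q => σ p.1 q.1 * τ p.2 q.2

/-- Separability: a finite convex combination of product density matrices. -/
def SeparableState {α β : Type*} [Fintype α] [Fintype β]
    (ρ : Matrix (α × β) (α × β) ℂ) : Prop :=
  ∃ (k : ℕ) (p : Fin k → ℝ) (σ : Fin k → Matrix α α ℂ) (τ : Fin k → Matrix β β ℂ),
    (∀ i, 0 ≤ p i) ∧ ∑ i, p i = 1 ∧ (∀ i, IsDensity (σ i)) ∧ (∀ i, IsDensity (τ i)) ∧
    ρ = ∑ i, (p i : ℂ) • tens (σ i) (τ i)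

/-- Partial transpose with respect to the second system. -/
def ptransB {α β : Type*} (ρ : Matrix (α × β) (α × β) ℂ) :
    Matrix (α × β) (α × β) ℂ :=
  fun p q => ρ (p.1, q.2) (q.1, p.2)

/-- Partial trace over the second system. -/
def ptrB {α β : Type*} [Fintype β] (ρ : Matrix (α × β) (α × β) ℂ) : Matrix α α ℂ :=
  fun i k => ∑ j, ρ (i, j) (k, j)

/-- Partial trace over the first system. -/
def ptrA {α β : Type*} [Fintype α] (ρ : Matrix (α × β) (α × β) ℂ) : Matrix β β ℂ :=
  fun j l => ∑ i, ρ (i, j) (i, l)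

/-- Rank-one projection |ψ⟩⟨ψ| associated with a vector. -/
def projv {α : Type*} (ψ : α → ℂ) : Matrix α α ℂ :=
  fun x y => ψ x * (starRingEnd ℂ) (ψ y)

/-- Unit vector condition. -/
def UnitVec {α : Type*} [Fintype α] (ψ : α → ℂ) : Prop :=
  ∑ x, Complex.normSq (ψ x) = 1

/-- Two-party reduced state ρ_АБ of a tripartite pure state. -/
def rhoAB {α β γ : Type*} [Fintype γ] (ψ : α × β × γ → ℂ) :
    Matrix (α × β) (α × β) ℂ :=
  fun p q => ∑ c, ψ (p.1, p.2, c) * (starRingEnd ℂ) (ψ (q.1, q.2, c))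

def rhoBC {α β γ : Type*} [Fintype α] (ψ : α × β × γ → ℂ) :
    Matrix (β × γ) (β × γ) ℂ :=
  fun p q => ∑ a, ψ (a, p.1, p.2) * (starRingEnd ℂ) (ψ (a, q.1, q.2))

def rhoAC {α β γ : Type*} [Fintype β] (ψ : α × β × γ → ℂ) :
    Matrix (α × γ) (α × γ) ℂ :=
  fun p q => ∑ b, ψ (p.1, b, p.2) * (starRingEnd ℂ) (ψ (q.1, b, q.2))

def rhoA {α β γ : Type*} [Fintype β] [Fintype γ] (ψ : α × β × γ → ℂ) :
    Matrix α α ℂ :=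
  fun x y => ∑ b, ∑ c, ψ (x, b, c) * (starRingEnd ℂ) (ψ (y, b, c))

def rhoB {α β γ : Type*} [Fintype α] [Fintype γ] (ψ : α × β × γ → ℂ) :
    Matrix β β ℂ :=
  fun x y => ∑ a, ∑ c, ψ (a, x, c) * (starRingEnd ℂ) (ψ (a, y, c))

def rhoC {α β γ : Type*} [Fintype α] [Fintype β] (ψ : α × β × γ → ℂ) :
    Matrix γ γ ℂ :=
  fun x y => ∑ a, ∑ b, ψ (a, b, x) * (starRingEnd ℂ) (ψ (a, b, y))

/-- `x` majorizes `y` (for nonnegative vectors, with implicit zero padding):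
the sum of any `|T|` entries of `y` is dominated by some choice of at most
`|T|` entries of `x`, and the total sums agree. -/
def Majorizes {α β : Type*} [Fintype α] [Fintype β] (x : α → ℝ) (y : β → ℝ) : Prop :=
  (∀ T : Finset β, ∃ S : Finset α, S.card ≤ T.card ∧ ∑ i ∈ T, y i ≤ ∑ i ∈ S, x i) ∧
  ∑ i, x i = ∑ i, y i

/-- Von Neumann entropy of a Hermitian matrix, via its eigenvalues. -/
def vN {α : Type*} [Fintype α] [DecidableEq α] {ρ : Matrix α α ℂ}
    (h : ρ.IsHermitian) : ℝ :=
  -∑ i, h.eigenvalues i * Real.log (h.eigenvalues i)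

/-- Tensor rank of a tripartite vector: least number of product vectors summing to it. -/
def tensorRank {α β γ : Type*} [Fintype α] [Fintype β] [Fintype γ]
    (ψ : α × β × γ → ℂ) : ℕ :=
  sInf {r : ℕ | ∃ (a : Fin r → α → ℂ) (b : Fin r → β → ℂ) (c : Fin r → γ → ℂ),
    ∀ x, ψ x = ∑ i, a i x.1 * b i x.2.1 * c i x.2.2}

/-- Orthonormal family of vectors. -/
def OrthonormalFam {α : Type*} [Fintype α] {k : ℕ} (v : Fin k → α → ℂ) : Prop :=
  ∀ i j, ∑ x, (starRingEnd ℂ) (v i x) * v j x = if i = j then 1 else 0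

/-- Maximally correlated state: ρ = Σ_{i,j} c_{ij} |i_B⟩⟨j_B| ⊗ |i_C⟩⟨j_C|
for some orthonormal families. -/
def IsMaxCorrelated {β γ : Type*} [Fintype β] [Fintype γ]
    (ρ : Matrix (β × γ) (β × γ) ℂ) : Prop :=
  ∃ (k : ℕ) (c : Matrix (Fin k) (Fin k) ℂ) (e : Fin k → β → ℂ) (f : Fin k → γ → ℂ),
    OrthonormalFam e ∧ OrthonormalFam f ∧
    ∀ p q, ρ p q = ∑ i, ∑ j,
      c i j * (e i p.1 * (starRingEnd ℂ) (e j q.1)) * (f i p.2 * (starRingEnd ℂ) (f j q.2))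

open scoped Kronecker

lemma tens_eq_kronecker {α β : Type*} (σ : Matrix α α ℂ) (τ : Matrix β β ℂ) :
    tens σ τ = σ ⊗ₖ τ :=
  rfl

lemma ptransB_tens {α β : Type*} (σ : Matrix α α ℂ) (τ : Matrix β β ℂ) :
    ptransB (tens σ τ) = tens σ τᵀ :=
  rfl

lemma ptransB_sum_smul {α β ι : Type*} (s : Finset ι) (c : ι → ℂ)
    (A : ι → Matrix (α × β) (α × β) ℂ) :
    ptransB (∑ i ∈ s, c i • A i) = ∑ i ∈ s, c i • ptransB (A i) := by
  ext p q
  simp only [ptransB, Matrix.sum_apply, Matrix.smul_apply]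

lemma Matrix.PosSemidef.tens {α β : Type*} [Fintype α] [Fintype β]
    {σ : Matrix α α ℂ} {τ : Matrix β β ℂ} (hσ : σ.PosSemidef) (hτ : τ.PosSemidef) :
    (tens σ τ).PosSemidef :=
  tens_eq_kronecker σ τ ▸ hσ.kronecker hτ

/-- Partial transposition maps each product state `σ ⊗ τ` to the product state `σ ⊗ τᵀ`,
and `τᵀ` is again positive semidefinite. -/
theorem SeparableState.posSemidef_ptransB {α β : Type*} [Fintype α] [Fintype β]
    {ρ : Matrix (α × β) (α × β) ℂ} (hsep : SeparableState ρ) :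
    (ptransB ρ).PosSemidef := by
  obtain ⟨k, p, σ, τ, hp, -, hσ, hτ, rfl⟩ := hsep
  rw [ptransB_sum_smul]
  refine posSemidef_sum _ fun i _ => ?_
  rw [ptransB_tens]
  exact ((hσ i).1.tens (hτ i).1.transpose).smul (Complex.zero_le_real.mpr (hp i))

theorem separable_implies_ppt_general {M N : ℕ}
    (ρ : Matrix (Fin M × Fin N) (Fin M × Fin N) ℂ)
    (hsep : SeparableState ρ) :
    (ptransB ρ).PosSemidef :=
  hsep.posSemidef_ptransB

/-- a separable bipartite density matrix has positive semidefinite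
partial transpose. -/
theorem separable_implies_ppt {M N : ℕ}
    (ρ : Matrix (Fin M × Fin N) (Fin M × Fin N) ℂ)
    (hρ : IsDensity ρ) (hsep : SeparableState ρ) :
    (ptransB ρ).PosSemidef :=
  separable_implies_ppt_general ρ hsep

end
end

section
/- If a bipartite density matrix ρ_AB has positive semidefinite partial transpose (PPT), then it satisfies the reduction criterion: ρ_A ⊗ I_B ≥ ρ_AB and I_A ⊗ ρ_B ≥ ρ_AB in the Loewner order. -/
open Matrix BigOperators
open scoped ComplexOrder

noncomputable section

/-!
The reduction map `X ↦ tr X • 1 - X` is the transpose map followed by the completely positive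
map `X ↦ ½ ∑_{a,b} A_{ab} X A_{ab}ᴴ`, where `A_{ab} = |a⟩⟨b| - |b⟩⟨a|`. Applied to the second
factor this gives `ρ_A ⊗ 1 - ρ = ½ ∑_{a,b} (1 ⊗ A_{ab}) ρ^{T_B} (1 ⊗ A_{ab})ᴴ`, a sum of positive
semidefinite matrices when `ρ^{T_B}` is positive semidefinite. The bound by `1 ⊗ ρ_B` follows by
exchanging the two factors, which preserves the PPT property.
-/

section
variable {β : Type*} [DecidableEq β]

def antisymmUnit (a b : β) : Matrix β β ℂ := single a b 1 - single b a 1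

lemma sum_antisymmUnit_apply_mul_star [Fintype β] (c c' d d' : β) :
    ∑ a, ∑ b, antisymmUnit a b c c' * star (antisymmUnit a b d d') =
      2 * ((if c = d ∧ c' = d' then 1 else 0) - if c = d' ∧ c' = d then 1 else 0) := by
  simp only [antisymmUnit, Matrix.sub_apply, single_apply, ite_and, star_sub, RCLike.star_def,
    mul_sub, sub_mul, ite_mul, one_mul, zero_mul, Finset.sum_sub_distrib, Finset.sum_ite_irrel,
    Finset.sum_ite_eq', Finset.mem_univ, ↓reduceIte, Finset.sum_const_zero, mul_ite, mul_one,
    mul_zero]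
  split_ifs <;> grind

end

section
variable {α β : Type*} [Fintype α] [Fintype β] [DecidableEq α]

lemma tens_one_mul_mul_conjTranspose_apply (A : Matrix β β ℂ) (σ : Matrix (α × β) (α × β) ℂ)
    (p q : α × β) :
    (tens (1 : Matrix α α ℂ) A * σ * (tens (1 : Matrix α α ℂ) A)ᴴ) p q =
      ∑ c, ∑ d, A p.2 c * σ (p.1, c) (q.1, d) * star (A q.2 d) := by
  simp only [mul_apply, conjTranspose_apply, tens, Fintype.sum_prod_type, one_apply, ite_mul,
    one_mul, zero_mul, apply_ite star, star_zero, mul_ite, mul_zero, Finset.sum_mul,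
    Finset.sum_ite_irrel, Finset.sum_const_zero, Finset.sum_ite_eq, Finset.mem_univ, if_true]
  exact Finset.sum_comm

variable [DecidableEq β]

lemma sum_tens_antisymmUnit_conj_ptransB (ρ : Matrix (α × β) (α × β) ℂ) :
    ∑ a, ∑ b, tens (1 : Matrix α α ℂ) (antisymmUnit a b) * ptransB ρ *
      (tens (1 : Matrix α α ℂ) (antisymmUnit a b))ᴴ = (2 : ℂ) • (tens (ptrB ρ) 1 - ρ) := by
  ext p q
  simp only [Matrix.sum_apply, tens_one_mul_mul_conjTranspose_apply]
  calc
    _ = ∑ c, ∑ d, ptransB ρ (p.1, c) (q.1, d) *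
        ∑ a, ∑ b, antisymmUnit a b p.2 c * star (antisymmUnit a b q.2 d) := by
      simp only [Finset.mul_sum]
      simp only [← Fintype.sum_prod_type']
      exact Fintype.sum_equiv ((Equiv.prodAssoc β β (β × β)).symm.trans
        ((Equiv.prodComm _ _).trans (Equiv.prodAssoc β β (β × β)))) _ _ fun _ => by
          simp only [Equiv.trans_apply, Equiv.prodAssoc_symm_apply, Equiv.prodComm_apply,
            Prod.swap_prod_mk, Equiv.prodAssoc_apply]
          ring
    _ = _ := by
      simp only [sum_antisymmUnit_apply_mul_star, mul_sub, mul_ite, mul_one, mul_zero, ite_and,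
        Finset.sum_sub_distrib, Finset.sum_ite_irrel, Finset.sum_const_zero, Finset.sum_ite_eq,
        Finset.sum_ite_eq', Finset.mem_univ, if_true]
      simp only [ptransB, ptrB, tens, one_apply, Matrix.smul_apply, Matrix.sub_apply, smul_eq_mul]
      rw [← Finset.sum_mul, Prod.mk.eta, Prod.mk.eta]
      split_ifs <;> ring

theorem posSemidef_tens_ptrB_one_sub {ρ : Matrix (α × β) (α × β) ℂ}
    (hppt : (ptransB ρ).PosSemidef) : (tens (ptrB ρ) 1 - ρ).PosSemidef := by
  have h : ((2 : ℂ) • (tens (ptrB ρ) 1 - ρ)).PosSemidef := by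
    rw [← sum_tens_antisymmUnit_conj_ptransB]
    exact posSemidef_sum _ fun a _ => posSemidef_sum _ fun b _ =>
      hppt.mul_mul_conjTranspose_same _
  simpa [smul_smul] using h.smul (show (0 : ℂ) ≤ 2⁻¹ by positivity)

end

section
variable {α β : Type*}

lemma ptransB_submatrix_swap (ρ : Matrix (α × β) (α × β) ℂ) :
    ptransB (ρ.submatrix Prod.swap Prod.swap) = (ptransB ρ)ᵀ.submatrix Prod.swap Prod.swap :=
  rfl

lemma ptrB_submatrix_swap [Fintype α] (ρ : Matrix (α × β) (α × β) ℂ) :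
    ptrB (ρ.submatrix Prod.swap Prod.swap) = ptrA ρ :=
  rfl

lemma tens_submatrix_swap (σ : Matrix α α ℂ) (τ : Matrix β β ℂ) :
    (tens σ τ).submatrix Prod.swap Prod.swap = tens τ σ := by
  ext p q
  exact mul_comm _ _

theorem posSemidef_tens_one_ptrA_sub [Fintype α] [Fintype β] [DecidableEq α] [DecidableEq β]
    {ρ : Matrix (α × β) (α × β) ℂ} (hppt : (ptransB ρ).PosSemidef) :
    (tens 1 (ptrA ρ) - ρ).PosSemidef := by
  have hswap : (ptransB (ρ.submatrix Prod.swap Prod.swap)).PosSemidef := by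
    rw [ptransB_submatrix_swap]
    exact hppt.transpose.submatrix _
  have h := (posSemidef_tens_ptrB_one_sub hswap).submatrix Prod.swap
  rwa [submatrix_sub, Pi.sub_apply, Pi.sub_apply, ptrB_submatrix_swap, tens_submatrix_swap,
    submatrix_submatrix, Prod.swap_swap_eq, submatrix_id_id] at h

end

theorem ppt_implies_reduction_general {M N : ℕ}
    (ρ : Matrix (Fin M × Fin N) (Fin M × Fin N) ℂ)
    (hppt : (ptransB ρ).PosSemidef) :
    (tens (ptrB ρ) (1 : Matrix (Fin N) (Fin N) ℂ) - ρ).PosSemidef ∧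
    (tens (1 : Matrix (Fin M) (Fin M) ℂ) (ptrA ρ) - ρ).PosSemidef :=
  ⟨posSemidef_tens_ptrB_one_sub hppt, posSemidef_tens_one_ptrA_sub hppt⟩

/-- a PPT bipartite density matrix satisfies the reduction
criterion: ρ_A ⊗ I_B ≥ ρ_AB and I_A ⊗ ρ_B ≥ ρ_AB in the Loewner order. -/
theorem ppt_implies_reduction {M N : ℕ}
    (ρ : Matrix (Fin M × Fin N) (Fin M × Fin N) ℂ)
    (hρ : IsDensity ρ) (hppt : (ptransB ρ).PosSemidef) :
    (tens (ptrB ρ) (1 : Matrix (Fin N) (Fin N) ℂ) - ρ).PosSemidef ∧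
    (tens (1 : Matrix (Fin M) (Fin M) ℂ) (ptrA ρ) - ρ).PosSemidef :=
  ppt_implies_reduction_general ρ hppt
end
end

section
/- If a bipartite density matrix ρ_AB satisfies the reduction criterion ρ_A ⊗ I_B ≥ ρ_AB, then the eigenvalue vector of ρ_A majorizes the eigenvalue vector of ρ_AB (both listed in decreasing order, padded with zeros to equal length). -/
open Matrix BigOperators
open scoped ComplexOrder

noncomputable section

/-! Let `σ = ρ_A` have eigenpairs `(μ_a, u_a)`, let `ε > 0` and `D = σ + ε`. For a set `T` of
eigenvectors `v_i` of `ρ`, the truncation `P = ∑_{i ∈ T} λ_i v_i v_i†` satisfies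
`P ≤ ρ ≤ σ ⊗ I ≤ D ⊗ I`. The numbers `r_a = ⟨u_a, (Tr_B P) u_a⟩ / (μ_a + ε)` lie in `[0, 1]`
because `Tr_B P ≤ Tr_B ρ = σ`; they sum to `Tr ((D⁻¹ ⊗ I) P) ≤ |T|`, because a rank-one
`c v v† ≤ D ⊗ I` has `c ⟨v, (D ⊗ I)⁻¹ v⟩ ≤ 1`; and `∑_{i ∈ T} λ_i = Tr P = ∑_a (μ_a + ε) r_a`.
Over `{0 ≤ r ≤ 1, ∑ r ≤ k}` the linear form `∑_a μ_a r_a` with `μ ≥ 0` is maximised by the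
indicator of the `k` largest `μ_a`, and letting `ε → 0` gives the majorization. -/

open scoped MatrixOrder Kronecker

section PartialTrace

variable {α β : Type*} [Fintype β]

lemma ptrB_eq_sum_submatrix (X : Matrix (α × β) (α × β) ℂ) :
    ptrB X = ∑ b, X.submatrix (·, b) (·, b) := by
  ext i k
  simp [ptrB, Matrix.sum_apply]

lemma ptrB_sub (X Y : Matrix (α × β) (α × β) ℂ) : ptrB (X - Y) = ptrB X - ptrB Y := by
  ext i k
  simp [ptrB, Finset.sum_sub_distrib]

lemma Matrix.PosSemidef.ptrB [Fintype α] {X : Matrix (α × β) (α × β) ℂ} (hX : X.PosSemidef) :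
    (ptrB X).PosSemidef := by
  rw [ptrB_eq_sum_submatrix]
  exact Matrix.posSemidef_sum _ fun b _ => hX.submatrix _

lemma ptrB_mono [Fintype α] {X Y : Matrix (α × β) (α × β) ℂ} (h : X ≤ Y) : ptrB X ≤ ptrB Y := by
  rw [Matrix.le_iff, ← ptrB_sub]
  exact h.ptrB

lemma trace_ptrB [Fintype α] (X : Matrix (α × β) (α × β) ℂ) : (ptrB X).trace = X.trace := by
  simp [Matrix.trace, ptrB, Fintype.sum_prod_type]

lemma trace_kronecker_one_mul_eq_trace_mul_ptrB [Fintype α] [DecidableEq β] (Z : Matrix α α ℂ)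
    (X : Matrix (α × β) (α × β) ℂ) :
    ((Z ⊗ₖ (1 : Matrix β β ℂ)) * X).trace = (Z * ptrB X).trace := by
  simp only [Matrix.trace, Matrix.diag, Matrix.mul_apply, Fintype.sum_prod_type,
    Matrix.kroneckerMap_apply, Matrix.one_apply, ptrB, Finset.mul_sum]
  simp [Finset.sum_comm (γ := β)]

end PartialTrace

lemma Matrix.trace_mul_vecMulVec_star {n : Type*} [Fintype n] (W : Matrix n n ℂ) (v : n → ℂ) :
    (W * vecMulVec v (star v)).trace = star v ⬝ᵥ W *ᵥ v := by
  rw [mul_vecMulVec, trace_vecMulVec, dotProduct_comm]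

lemma Matrix.PosDef.mul_re_dotProduct_inv_mulVec_le_one {n : Type*} [Fintype n] [DecidableEq n]
    {D : Matrix n n ℂ} (hD : D.PosDef) {c : ℝ} (hc : 0 ≤ c) {v : n → ℂ}
    (h : c • vecMulVec v (star v) ≤ D) : c * (star v ⬝ᵥ D⁻¹ *ᵥ v).re ≤ 1 := by
  set t := star v ⬝ᵥ D⁻¹ *ᵥ v
  set w := D⁻¹ *ᵥ v
  have hDw : D *ᵥ w = v := by
    rw [mulVec_mulVec, mul_nonsing_inv _ ((isUnit_iff_isUnit_det D).mp hD.isUnit), one_mulVec]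
  have hwv : star w ⬝ᵥ v = t := by
    rw [star_mulVec, ← dotProduct_mulVec, hD.isHermitian.inv.eq]
  have hvw : star v ⬝ᵥ w = star t := by rw [star_dotProduct, hwv]
  -- testing `h` at `w = D⁻¹ v` gives `c t² ≤ t`, where `t = v† D⁻¹ v ≥ 0`
  have hquad : 0 ≤ star w ⬝ᵥ (D - c • vecMulVec v (star v)) *ᵥ w :=
    (Matrix.le_iff.mp h).dotProduct_mulVec_nonneg w
  have ht : 0 ≤ t := by simpa [hDw, hwv] using hD.posSemidef.dotProduct_mulVec_nonneg w
  rw [sub_mulVec, dotProduct_sub, hDw, hwv, smul_mulVec, vecMulVec_mulVec, hvw] at hquad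
  clear_value t w
  obtain ⟨x, rfl⟩ : ∃ x : ℝ, t = x := ⟨t.re, (Complex.ext rfl (Complex.nonneg_iff.mp ht).2.symm)⟩
  simp only [op_smul_eq_smul, dotProduct_smul, hwv, Complex.star_def, Complex.conj_ofReal,
    smul_eq_mul, Complex.real_smul] at hquad
  have hx : 0 ≤ x := by exact_mod_cast ht
  have hcx : c * (x * x) ≤ x := by
    have := sub_nonneg.mp hquad
    rw [← mul_assoc] at this ⊢
    exact_mod_cast this
  simp only [Complex.ofReal_re]
  nlinarith

lemma Matrix.PosDef.re_trace_inv_mul_sum_le_card {n ι : Type*} [Fintype n] [DecidableEq n]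
    {D : Matrix n n ℂ} (hD : D.PosDef) (s : Finset ι) {c : ι → ℝ} (hc : ∀ i ∈ s, 0 ≤ c i)
    {x : ι → n → ℂ} (h : ∀ i ∈ s, c i • vecMulVec (x i) (star (x i)) ≤ D) :
    (D⁻¹ * ∑ i ∈ s, c i • vecMulVec (x i) (star (x i))).trace.re ≤ s.card := by
  rw [Finset.mul_sum, trace_sum, Complex.re_sum, Finset.card_eq_sum_ones, Nat.cast_sum]
  refine Finset.sum_le_sum fun i hi => ?_
  rw [mul_smul_comm, trace_smul, trace_mul_vecMulVec_star, Complex.real_smul,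
    Complex.re_ofReal_mul, Nat.cast_one]
  exact hD.mul_re_dotProduct_inv_mulVec_le_one (hc i hi) (h i hi)

namespace Matrix.IsHermitian

variable {n : Type*} [Fintype n] [DecidableEq n] {A : Matrix n n ℂ} (hA : A.IsHermitian)

lemma sum_vecMulVec_eigenvectorBasis :
    ∑ i, vecMulVec ⇑(hA.eigenvectorBasis i) (star ⇑(hA.eigenvectorBasis i)) = 1 := by
  have hU := Matrix.mem_unitaryGroup_iff.mp hA.eigenvectorUnitary.2
  ext p q
  simpa [Matrix.mul_apply, Matrix.sum_apply, vecMulVec_apply] using congrFun (congrFun hU p) q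

lemma sum_eigenvalues_smul_vecMulVec_eigenvectorBasis :
    ∑ i, hA.eigenvalues i • vecMulVec ⇑(hA.eigenvectorBasis i) (star ⇑(hA.eigenvectorBasis i))
      = A := by
  conv_rhs => rw [← A.mul_one, ← hA.sum_vecMulVec_eigenvectorBasis, Finset.mul_sum]
  simp_rw [mul_vecMulVec, mulVec_eigenvectorBasis, smul_vecMulVec]

lemma star_eigenvectorBasis_dotProduct_self (i : n) :
    star ⇑(hA.eigenvectorBasis i) ⬝ᵥ ⇑(hA.eigenvectorBasis i) = 1 := by
  rw [dotProduct_comm, ← EuclideanSpace.inner_eq_star_dotProduct]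
  simp

lemma trace_eq_sum_dotProduct_eigenvectorBasis (W : Matrix n n ℂ) :
    W.trace = ∑ i, star ⇑(hA.eigenvectorBasis i) ⬝ᵥ W *ᵥ ⇑(hA.eigenvectorBasis i) := by
  conv_lhs => rw [← W.mul_one, ← hA.sum_vecMulVec_eigenvectorBasis, Finset.mul_sum, trace_sum]
  simp_rw [trace_mul_vecMulVec_star]

lemma inv_add_smul_one {c : ℝ} (hc : ∀ i, hA.eigenvalues i + c ≠ 0) :
    (A + c • (1 : Matrix n n ℂ))⁻¹ = ∑ i, (hA.eigenvalues i + c)⁻¹ •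
      vecMulVec ⇑(hA.eigenvectorBasis i) (star ⇑(hA.eigenvectorBasis i)) := by
  refine inv_eq_right_inv ?_
  simp_rw [Finset.mul_sum, mul_smul_comm, mul_vecMulVec, add_mulVec, smul_mulVec, one_mulVec,
    mulVec_eigenvectorBasis, ← add_smul, smul_vecMulVec, smul_smul, inv_mul_cancel₀ (hc _),
    one_smul]
  exact hA.sum_vecMulVec_eigenvectorBasis

end Matrix.IsHermitian

lemma Matrix.PosSemidef.sum_eigenvalues_smul_vecMulVec_le {n : Type*} [Fintype n] [DecidableEq n]
    {A : Matrix n n ℂ} (hA : A.PosSemidef) (T : Finset n) :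
    ∑ i ∈ T, hA.isHermitian.eigenvalues i •
      vecMulVec ⇑(hA.isHermitian.eigenvectorBasis i) (star ⇑(hA.isHermitian.eigenvectorBasis i))
      ≤ A := by
  conv_rhs => rw [← hA.isHermitian.sum_eigenvalues_smul_vecMulVec_eigenvectorBasis]
  exact Finset.sum_le_sum_of_subset_of_nonneg (Finset.subset_univ T) fun i _ _ =>
    ((posSemidef_vecMulVec_self_star _).smul (hA.eigenvalues_nonneg i)).nonneg

lemma Matrix.IsHermitian.exists_trace_eq_sum_mul_of_le {n : Type*} [Fintype n] [DecidableEq n]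
    {σ W : Matrix n n ℂ} (hσ : σ.IsHermitian) (hW0 : 0 ≤ W) (hWσ : W ≤ σ) {ε : ℝ} (hε : 0 < ε) :
    ∃ r : n → ℝ, (∀ a, 0 ≤ r a) ∧ (∀ a, r a ≤ 1) ∧
      ∑ a, r a = ((σ + ε • 1)⁻¹ * W).trace.re ∧
      W.trace.re = ∑ a, (hσ.eigenvalues a + ε) * r a := by
  set u := fun a => ⇑(hσ.eigenvectorBasis a)
  set d := fun a => (star (u a) ⬝ᵥ W *ᵥ u a).re
  have hd0 : ∀ a, 0 ≤ d a := fun a =>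
    (Complex.nonneg_iff.mp (hW0.posSemidef.dotProduct_mulVec_nonneg (u a))).1
  have hdμ : ∀ a, d a ≤ hσ.eigenvalues a := fun a => by
    have h := (Complex.nonneg_iff.mp ((Matrix.le_iff.mp hWσ).dotProduct_mulVec_nonneg (u a))).1
    rw [sub_mulVec, dotProduct_sub, Complex.sub_re] at h
    have hμ : hσ.eigenvalues a = (star (u a) ⬝ᵥ σ *ᵥ u a).re := hσ.eigenvalues_eq a
    exact hμ ▸ sub_nonneg.mp h
  have hpos : ∀ a, 0 < hσ.eigenvalues a + ε := fun a => by linarith [hd0 a, hdμ a]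
  refine ⟨fun a => d a / (hσ.eigenvalues a + ε), fun a => div_nonneg (hd0 a) (hpos a).le,
    fun a => (div_le_one (hpos a)).2 (by linarith [hdμ a]), ?_, ?_⟩
  · rw [hσ.inv_add_smul_one fun a => (hpos a).ne', Finset.sum_mul, trace_sum, Complex.re_sum]
    refine Finset.sum_congr rfl fun a _ => ?_
    rw [smul_mul_assoc, trace_smul, trace_mul_comm, trace_mul_vecMulVec_star, Complex.real_smul,
      Complex.re_ofReal_mul]
    exact div_eq_inv_mul _ _
  · rw [hσ.trace_eq_sum_dotProduct_eigenvectorBasis W, Complex.re_sum]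
    exact Finset.sum_congr rfl fun a _ => (mul_div_cancel₀ _ (hpos a).ne').symm

section KyFan

open Finset

variable {ι : Type*} [Fintype ι]

lemma exists_card_eq_forall_le_of_mem_of_notMem [DecidableEq ι] {β : Type*} [LinearOrder β]
    (μ : ι → β) {k : ℕ} (hk : k ≤ Fintype.card ι) :
    ∃ S : Finset ι, S.card = k ∧ ∀ a ∈ S, ∀ b ∉ S, μ b ≤ μ a := by
  induction k with
  | zero => exact ⟨∅, rfl, by simp⟩
  | succ k ih =>
    obtain ⟨S, hcard, hsep⟩ := ih (by omega)
    obtain ⟨b, hb, hbmax⟩ := Sᶜ.exists_max_image μ (by rw [← card_pos, card_compl]; omega)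
    refine ⟨insert b S, by rw [card_insert_of_notMem (mem_compl.mp hb), hcard], ?_⟩
    intro a ha c hc
    rw [mem_insert, not_or] at hc
    rcases mem_insert.mp ha with rfl | haS
    · exact hbmax c (mem_compl.mpr hc.2)
    · exact hsep a haS c hc.2

lemma sum_mul_le_sum_of_threshold {μ r : ι → ℝ} {S : Finset ι} {m : ℝ} (hm : 0 ≤ m)
    (hS : ∀ a ∈ S, m ≤ μ a) (hSc : ∀ b ∉ S, μ b ≤ m) (hr0 : ∀ a, 0 ≤ r a) (hr1 : ∀ a, r a ≤ 1)
    (hsum : ∑ a, r a ≤ S.card) : ∑ a, μ a * r a ≤ ∑ a ∈ S, μ a := by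
  classical
  have hout : ∑ b ∈ Sᶜ, μ b * r b ≤ m * ∑ b ∈ Sᶜ, r b := by
    rw [mul_sum]
    exact sum_le_sum fun b hb => mul_le_mul_of_nonneg_right (hSc b (mem_compl.mp hb)) (hr0 b)
  have hin : m * ∑ a ∈ S, (1 - r a) ≤ ∑ a ∈ S, μ a - ∑ a ∈ S, μ a * r a := by
    rw [mul_sum, ← sum_sub_distrib]
    exact sum_le_sum fun a ha => by nlinarith [hS a ha, hr1 a]
  have hmass : ∑ b ∈ Sᶜ, r b ≤ ∑ a ∈ S, (1 - r a) := by
    rw [sum_sub_distrib, sum_const, nsmul_one]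
    linarith [sum_add_sum_compl S r]
  linarith [sum_add_sum_compl S (fun a => μ a * r a), mul_le_mul_of_nonneg_left hmass hm]

lemma exists_card_le_forall_sum_mul_le (μ : ι → ℝ) (hμ : ∀ a, 0 ≤ μ a) (k : ℕ) :
    ∃ S : Finset ι, S.card ≤ k ∧ ∀ r : ι → ℝ, (∀ a, 0 ≤ r a) → (∀ a, r a ≤ 1) →
      ∑ a, r a ≤ k → ∑ a, μ a * r a ≤ ∑ a ∈ S, μ a := by
  classical
  rcases le_or_gt (Fintype.card ι) k with hk | hk
  · refine ⟨univ, by simpa using hk, fun r hr0 hr1 _ => ?_⟩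
    refine sum_mul_le_sum_of_threshold le_rfl (fun a _ => hμ a) (by simp) hr0 hr1 ?_
    simpa using sum_le_sum fun a (_ : a ∈ univ) => hr1 a
  · obtain ⟨S, hcard, hsep⟩ := exists_card_eq_forall_le_of_mem_of_notMem μ hk.le
    obtain ⟨b, hb⟩ : Sᶜ.Nonempty := by rw [← card_pos, card_compl]; omega
    refine ⟨S, hcard.le, fun r hr0 hr1 hsum => ?_⟩
    refine sum_mul_le_sum_of_threshold ((hμ b).trans (le_sup' μ hb)) (fun a ha => ?_)
      (fun c hc => le_sup' μ (mem_compl.mpr hc)) hr0 hr1 (by rwa [hcard])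
    exact sup'_le _ _ fun c hc => hsep a ha c (mem_compl.mp hc)

end KyFan

section Reduction

variable {α β : Type*} [Fintype α] [DecidableEq α] [Fintype β] [DecidableEq β]
  {ρ : Matrix (α × β) (α × β) ℂ}

lemma exists_sum_eigenvalues_eq_of_le_ptrB_kronecker_one (hρ : ρ.PosSemidef)
    (hσ : (ptrB ρ).IsHermitian) (hred : ρ ≤ ptrB ρ ⊗ₖ 1) (T : Finset (α × β)) {ε : ℝ}
    (hε : 0 < ε) :
    ∃ r : α → ℝ, (∀ a, 0 ≤ r a) ∧ (∀ a, r a ≤ 1) ∧ ∑ a, r a ≤ T.card ∧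
      ∑ i ∈ T, hρ.isHermitian.eigenvalues i = ∑ a, (hσ.eigenvalues a + ε) * r a := by
  set v := fun i => ⇑(hρ.isHermitian.eigenvectorBasis i)
  set P := ∑ i ∈ T, hρ.isHermitian.eigenvalues i • vecMulVec (v i) (star (v i))
  have hterm : ∀ i, 0 ≤ hρ.isHermitian.eigenvalues i • vecMulVec (v i) (star (v i)) := fun i =>
    ((posSemidef_vecMulVec_self_star _).smul (hρ.eigenvalues_nonneg i)).nonneg
  have hPρ : P ≤ ρ := hρ.sum_eigenvalues_smul_vecMulVec_le T
  have hP0 : 0 ≤ P := Finset.sum_nonneg fun i _ => hterm i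
  obtain ⟨r, hr0, hr1, hrsum, hrtr⟩ :=
    hσ.exists_trace_eq_sum_mul_of_le hP0.posSemidef.ptrB.nonneg (ptrB_mono hPρ) hε
  have hD : (ptrB ρ + ε • 1).PosDef :=
    Matrix.PosDef.posSemidef_add hρ.ptrB (Matrix.PosDef.one.smul hε)
  have hρD : ρ ≤ (ptrB ρ + ε • 1) ⊗ₖ (1 : Matrix β β ℂ) := by
    rw [add_kronecker, smul_kronecker, one_kronecker_one]
    exact hred.trans (le_add_of_nonneg_right (Matrix.PosSemidef.one.smul hε.le).nonneg)
  refine ⟨r, hr0, hr1, ?_, ?_⟩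
  · have hinv : (ptrB ρ + ε • 1)⁻¹ ⊗ₖ (1 : Matrix β β ℂ) = ((ptrB ρ + ε • 1) ⊗ₖ 1)⁻¹ := by
      rw [inv_kronecker, inv_one]
    rw [hrsum, ← trace_kronecker_one_mul_eq_trace_mul_ptrB, hinv]
    refine (hD.kronecker PosDef.one).re_trace_inv_mul_sum_le_card T
      (fun i _ => hρ.eigenvalues_nonneg i) fun i hi => ?_
    exact ((Finset.single_le_sum (fun j _ => hterm j) hi).trans hPρ).trans hρD
  · rw [← hrtr, trace_ptrB]
    simp [P, v, trace_sum, trace_smul, trace_vecMulVec, dotProduct_comm _ (star _),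
      hρ.isHermitian.star_eigenvectorBasis_dotProduct_self]

lemma exists_card_le_sum_eigenvalues_le_of_le_ptrB_kronecker_one (hρ : ρ.PosSemidef)
    (hσ : (ptrB ρ).IsHermitian) (hred : ρ ≤ ptrB ρ ⊗ₖ 1) (T : Finset (α × β)) :
    ∃ S : Finset α, S.card ≤ T.card ∧
      ∑ i ∈ T, hρ.isHermitian.eigenvalues i ≤ ∑ a ∈ S, hσ.eigenvalues a := by
  obtain ⟨S, hS, hSμ⟩ :=
    exists_card_le_forall_sum_mul_le hσ.eigenvalues hρ.ptrB.eigenvalues_nonneg T.card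
  refine ⟨S, hS, le_of_forall_pos_le_add fun δ hδ => ?_⟩
  have hε : 0 < δ / (T.card + 1) := by positivity
  obtain ⟨r, hr0, hr1, hrsum, heq⟩ :=
    exists_sum_eigenvalues_eq_of_le_ptrB_kronecker_one hρ hσ hred T hε
  have hεT : δ / (T.card + 1) * T.card ≤ δ := by
    rw [div_mul_eq_mul_div, div_le_iff₀ (by positivity)]
    nlinarith
  calc ∑ i ∈ T, hρ.isHermitian.eigenvalues i
      = ∑ a, hσ.eigenvalues a * r a + δ / (T.card + 1) * ∑ a, r a := by
        simp only [heq, add_mul, Finset.sum_add_distrib, Finset.mul_sum]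
    _ ≤ ∑ a ∈ S, hσ.eigenvalues a + δ / (T.card + 1) * T.card :=
        add_le_add (hSμ r hr0 hr1 hrsum) (mul_le_mul_of_nonneg_left hrsum hε.le)
    _ ≤ ∑ a ∈ S, hσ.eigenvalues a + δ := by linarith

lemma sum_eigenvalues_ptrB (hσ : (ptrB ρ).IsHermitian) (hρ : ρ.IsHermitian) :
    ∑ a, hσ.eigenvalues a = ∑ i, hρ.eigenvalues i := by
  have h := hσ.trace_eq_sum_eigenvalues.symm.trans
    ((trace_ptrB ρ).trans hρ.trace_eq_sum_eigenvalues)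
  exact_mod_cast h

end Reduction

/-- the reduction criterion ρ_A ⊗ I_B ≥ ρ_AB implies that the
eigenvalues of ρ_A majorize those of ρ_AB. -/
theorem reduction_implies_majorization {M N : ℕ}
    (ρ : Matrix (Fin M × Fin N) (Fin M × Fin N) ℂ)
    (hρ : IsDensity ρ) (hA : (ptrB ρ).IsHermitian)
    (hred : (tens (ptrB ρ) (1 : Matrix (Fin N) (Fin N) ℂ) - ρ).PosSemidef) :
    Majorizes hA.eigenvalues hρ.1.1.eigenvalues :=
  -- `hred` is `ρ ≤ ptrB ρ ⊗ₖ 1` up to unfolding `tens` and the Loewner order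
  ⟨fun T => exists_card_le_sum_eigenvalues_le_of_le_ptrB_kronecker_one hρ.1 hA hred T,
    sum_eigenvalues_ptrB hA hρ.1.1⟩
end
end

section
/- An entangled maximally correlated state ρ = Σ_{i,j} c_{ij} |ii⟩⟨jj| (with c_{ij} not diagonal, i.e., there exist i ≠ j with c_{ij} ≠ 0) has a partial transpose that is not positive semidefinite. -/
open Matrix BigOperators
open scoped ComplexOrder

noncomputable section

/-- The maximally correlated state ρ = Σ_{i,j} c_{ij} |ii⟩⟨jj| on C^d ⊗ C^d. -/
def maxCorrMat {d : ℕ} (c : Matrix (Fin d) (Fin d) ℂ) :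
    Matrix (Fin d × Fin d) (Fin d × Fin d) ℂ :=
  fun p q => if p.2 = p.1 ∧ q.2 = q.1 then c p.1 q.1 else 0

/-
Fix i ≠ j. In the partial transpose of ρ the diagonal entry at |ij⟩ vanishes while the entry
between |ij⟩ and |ji⟩ equals c_ij. A positive semidefinite matrix with a zero diagonal entry has
the whole corresponding row equal to zero (its 2 × 2 principal minors are nonnegative), so
c_ij ≠ 0 rules out positivity.
-/

theorem Matrix.PosSemidef.apply_eq_zero_of_diag_eq_zero {n 𝕜 : Type*} [Fintype n] [RCLike 𝕜]
    {A : Matrix n n 𝕜} (hA : A.PosSemidef) {i : n} (hi : A i i = 0) (j : n) : A i j = 0 := by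
  have hminor := (hA.submatrix ![i, j]).det_nonneg
  have hji : A j i = star (A i j) := (hA.1.apply j i).symm
  rw [det_fin_two] at hminor
  simp only [submatrix_apply, Matrix.cons_val_zero, Matrix.cons_val_one, hi, hji, zero_mul,
    zero_sub, RCLike.star_def, RCLike.mul_conj, neg_nonneg] at hminor
  have hnorm : ‖A i j‖ ^ 2 ≤ 0 := by exact_mod_cast hminor
  simpa using hnorm

section maxCorrMat

variable {d : ℕ} (c : Matrix (Fin d) (Fin d) ℂ)

theorem ptransB_maxCorrMat_apply_self_of_ne {i j : Fin d} (hij : i ≠ j) :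
    ptransB (maxCorrMat c) (i, j) (i, j) = 0 := by
  simp [ptransB, maxCorrMat, Ne.symm hij]

theorem ptransB_maxCorrMat_apply_swap (i j : Fin d) :
    ptransB (maxCorrMat c) (i, j) (j, i) = c i j := by
  simp [ptransB, maxCorrMat]

end maxCorrMat

theorem entangled_max_correlated_is_npt_general {d : ℕ}
    (c : Matrix (Fin d) (Fin d) ℂ)
    (hod : ∃ i j, i ≠ j ∧ c i j ≠ 0) :
    ¬(ptransB (maxCorrMat c)).PosSemidef := by
  intro hpsd
  obtain ⟨i, j, hij, hcij⟩ := hod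
  apply hcij
  rw [← ptransB_maxCorrMat_apply_swap c i j]
  exact hpsd.apply_eq_zero_of_diag_eq_zero (ptransB_maxCorrMat_apply_self_of_ne c hij) _

/-- an entangled maximally correlated state (c not diagonal)
has non-positive partial transpose. -/
theorem entangled_max_correlated_is_npt {d : ℕ}
    (c : Matrix (Fin d) (Fin d) ℂ) (hc : c.PosSemidef) (htr : c.trace = 1)
    (hod : ∃ i j, i ≠ j ∧ c i j ≠ 0) :
    ¬(ptransB (maxCorrMat c)).PosSemidef :=
  entangled_max_correlated_is_npt_general c hod

end
end
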